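/- In the free associative algebra K⟨X⟩ on variables x₁,…,xₙ, every automorphism fixing x₂,…,xₙ has the form x₁ ↦ αx₁ + f(x₂,…,xₙ), xⱼ ↦ xⱼ for j ≥ 2, where α is a nonzero scalar and f lies in the subalgebra generated by x₂,…,xₙ; in particular any such automorphism is tame (a product of elementary automorphisms). -/

import Mathlib

/-!
The argument uses the Fox derivative `∂ⱼ` of `A = K⟨X⟩` with respect to `xⱼ`, with values in
`A ⊗ Aᵒᵖ`, realised as the monoid algebra `K[W × Wᵐᵒᵖ]` over the words `W`. It satisfies the
Leibniz rule `∂ⱼ (a * b) = (a ⊗ 1) ∂ⱼ b + (1 ⊗ b) ∂ⱼ a` and recovers `a - a(xⱼ := 0)` as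
`∂ⱼ a • xⱼ`. If `φ` fixes the other variables, the Leibniz rule makes every `∂ⱼ (φ a)` a left
multiple of `∂ⱼ (φ xⱼ)`; choosing `φ a = xⱼ` gives `E * ∂ⱼ (φ xⱼ) = 1`. As `W × Wᵐᵒᵖ` has unique
products and no nontrivial units, `∂ⱼ (φ xⱼ)` is then a nonzero scalar `α`, so
`φ xⱼ = α xⱼ + (φ xⱼ)(xⱼ := 0)` and `φ` is itself elementary.
-/

open FreeAlgebra

/-- An elementary automorphism of the free associative algebra K⟨x₁,…,xₙ⟩:
it sends some xⱼ to α xⱼ + f with α ∈ K*, f not depending on xⱼ, and fixes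
all the other variables. -/
def IsElementaryAut (K : Type*) [Field K] (n : ℕ)
    (φ : FreeAlgebra K (Fin n) ≃ₐ[K] FreeAlgebra K (Fin n)) : Prop :=
  ∃ (j : Fin n) (α : K) (f : FreeAlgebra K (Fin n)),
    α ≠ 0 ∧
    f ∈ Algebra.adjoin K (FreeAlgebra.ι K '' {i : Fin n | i ≠ j}) ∧
    φ (FreeAlgebra.ι K j) = α • FreeAlgebra.ι K j + f ∧
    ∀ i : Fin n, i ≠ j → φ (FreeAlgebra.ι K i) = FreeAlgebra.ι K i

open MonoidAlgebra

namespace MonoidAlgebra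

theorem exists_eq_single_of_mul_eq_one {R M : Type*} [Semiring R] [NoZeroDivisors R]
    [Nontrivial R] [Monoid M] [TwoUniqueProds M] {f g : MonoidAlgebra R M} (h : f * g = 1) :
    ∃ a b : M, a * b = 1 ∧ f = single a (f.coeff a) ∧ g = single b (g.coeff b) := by
  classical
  set A := f.coeff.support
  set B := g.coeff.support
  have unique_prod_eq_one {a b : M} (ha : a ∈ A) (hb : b ∈ B) (hu : UniqueMul A B a b) :
      a * b = 1 := by
    have hab := coeff_mul_mul_of_uniqueMul hu ▸
      mul_ne_zero (Finsupp.mem_support_iff.mp ha) (Finsupp.mem_support_iff.mp hb)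
    by_contra hab1
    rw [h, one_def, coeff_single, Finsupp.single_eq_of_ne hab1] at hab
    exact hab rfl
  have hA : A.Nonempty := by
    simpa [A, Finsupp.support_nonempty_iff] using left_ne_zero_of_mul_eq_one h
  have hB : B.Nonempty := by
    simpa [B, Finsupp.support_nonempty_iff] using right_ne_zero_of_mul_eq_one h
  obtain hAB | hAB := lt_or_ge 1 (A.card * B.card)
  · obtain ⟨p, hp, q, hq, hpq, hup, huq⟩ := TwoUniqueProds.uniqueMul_of_one_lt_card hAB
    rw [Finset.mem_product] at hp hq
    have := hup hq.1 hq.2 <| by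
      rw [unique_prod_eq_one hp.1 hp.2 hup, unique_prod_eq_one hq.1 hq.2 huq]
    exact absurd (Prod.ext this.1 this.2) (Ne.symm hpq)
  · have hA1 : A.card ≤ 1 := le_of_mul_le_of_one_le_left hAB hB.card_pos
    have hB1 : B.card ≤ 1 := le_of_mul_le_of_one_le_right hAB hA.card_pos
    obtain ⟨a, ha, b, hb, hu⟩ := UniqueMul.of_card_le_one hA hB hA1 hB1
    refine ⟨a, b, unique_prod_eq_one ha hb hu, ext ?_, ext ?_⟩ <;>
      rw [coeff_single] <;> refine Finsupp.support_subset_singleton.mp fun x hx => ?_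
    exacts [Finset.mem_singleton.mpr (Finset.card_le_one.mp hA1 x hx a ha),
      Finset.mem_singleton.mpr (Finset.card_le_one.mp hB1 x hx b hb)]

section mapDomain

variable {R M N : Type*} [CommSemiring R] [Monoid M] [Monoid N]

theorem mapDomainLinearMap_prodMap_op_single_mul (m : M) (r : R)
    (x : MonoidAlgebra R (M × N)) :
    mapDomainLinearMap R R (Prod.map id MulOpposite.op) (single (m, 1) r * x) =
      single (m, 1) r * mapDomainLinearMap R R (Prod.map id MulOpposite.op) x := by
  induction x using MonoidAlgebra.induction_on with
  | of p => simp [single_mul_single, Prod.map, Prod.mul_def]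
  | add x y hx hy => simp only [mul_add, map_add, hx, hy]
  | smul s x hx => simp only [mul_smul_comm, map_smul, hx]

theorem mapDomainLinearMap_prodMap_op_mul_single (n : N) (r : R)
    (x : MonoidAlgebra R (M × N)) :
    mapDomainLinearMap R R (Prod.map id MulOpposite.op) (x * single (1, n) r) =
      single (1, MulOpposite.op n) r * mapDomainLinearMap R R (Prod.map id MulOpposite.op) x := by
  induction x using MonoidAlgebra.induction_on with
  | of p => simp [single_mul_single, mul_comm r, Prod.map, Prod.mul_def]
  | add x y hx hy => simp only [add_mul, map_add, hx, hy, mul_add]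
  | smul s x hx => simp only [smul_mul_assoc, map_smul, hx, mul_smul_comm]

end mapDomain

end MonoidAlgebra

noncomputable section

namespace FreeAlgebra

variable {K X : Type*} [CommRing K] [DecidableEq X] (j : X)

def killVar : FreeAlgebra K X →ₐ[K] FreeAlgebra K X :=
  lift K fun i => if i = j then 0 else ι K i

/-- Over `K[W × W] ≅ A ⊗ A` this is `a ↦ !![a ⊗ 1, ∂ⱼ a; 0, 1 ⊗ a]`; its multiplicativity is the
Leibniz rule `∂ⱼ (a * b) = (a ⊗ 1) * ∂ⱼ b + ∂ⱼ a * (1 ⊗ b)`. -/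
def foxMatrix :
    FreeAlgebra K X →ₐ[K] Matrix (Fin 2) (Fin 2) (MonoidAlgebra K (FreeMonoid X × FreeMonoid X)) :=
  lift K fun i => !![single (.of i, 1) 1, if i = j then 1 else 0; 0, single (1, .of i) 1]

/-- The Fox derivative, moved to `K[W × Wᵐᵒᵖ] ≅ A ⊗ Aᵒᵖ`, where both actions of the bimodule
become left multiplications. -/
def foxDeriv (a : FreeAlgebra K X) : MonoidAlgebra K (FreeMonoid X × (FreeMonoid X)ᵐᵒᵖ) :=
  mapDomainLinearMap K K (Prod.map id MulOpposite.op) (foxMatrix j a 0 1)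

variable (K X) in
def leftMul : FreeAlgebra K X →ₐ[K] MonoidAlgebra K (FreeMonoid X × (FreeMonoid X)ᵐᵒᵖ) :=
  lift K fun i => single (.of i, 1) 1

variable (K X) in
def rightMul : FreeAlgebra K X →ₐ[K] (MonoidAlgebra K (FreeMonoid X × (FreeMonoid X)ᵐᵒᵖ))ᵐᵒᵖ :=
  lift K fun i => .op (single (1, .op (.of i)) 1)

/-- `(s ⊗ t) • y = s * y * killVar j t`. -/
def twistedAction :
    MonoidAlgebra K (FreeMonoid X × (FreeMonoid X)ᵐᵒᵖ) →ₐ[K] Module.End K (FreeAlgebra K X) :=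
  MonoidAlgebra.lift K _ _ <| MonoidHom.noncommCoprod
    ((Algebra.lmul K (FreeAlgebra K X)).toMonoidHom.comp (FreeMonoid.lift (ι K)))
    ((DistribMulAction.toModuleEnd K (FreeAlgebra K X)).comp
      (MonoidHom.op ((killVar (K := K) j).toRingHom.toMonoidHom.comp (FreeMonoid.lift (ι K)))))
    fun _ _ => LinearMap.commute_mulLeft_right _ _

variable {j}

theorem foxMatrix_one_zero (a : FreeAlgebra K X) : foxMatrix j a 1 0 = 0 := by
  induction a using FreeAlgebra.induction with
  | grade0 r => simp [Matrix.algebraMap_matrix_apply]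
  | grade1 i => simp [foxMatrix]
  | mul a b ha hb => simp [Matrix.mul_apply, ha, hb]
  | add a b ha hb => simp [ha, hb]

theorem foxMatrix_mul_zero_zero (a b : FreeAlgebra K X) :
    foxMatrix j (a * b) 0 0 = foxMatrix j a 0 0 * foxMatrix j b 0 0 := by
  simp [Matrix.mul_apply, foxMatrix_one_zero]

theorem foxMatrix_mul_one_one (a b : FreeAlgebra K X) :
    foxMatrix j (a * b) 1 1 = foxMatrix j a 1 1 * foxMatrix j b 1 1 := by
  simp [Matrix.mul_apply, foxMatrix_one_zero]

theorem mapDomainLinearMap_foxMatrix_zero_zero_mul (a : FreeAlgebra K X)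
    (x : MonoidAlgebra K (FreeMonoid X × FreeMonoid X)) :
    mapDomainLinearMap K K (Prod.map id MulOpposite.op) (foxMatrix j a 0 0 * x) =
      leftMul K X a * mapDomainLinearMap K K (Prod.map id MulOpposite.op) x := by
  induction a using FreeAlgebra.induction generalizing x with
  | grade0 r =>
    simpa [Matrix.algebraMap_matrix_apply, ← Prod.one_eq_mk] using
      mapDomainLinearMap_prodMap_op_single_mul 1 r x
  | grade1 i => simpa [foxMatrix, leftMul] using mapDomainLinearMap_prodMap_op_single_mul _ _ x
  | mul a b ha hb => rw [foxMatrix_mul_zero_zero, mul_assoc, ha, hb, map_mul, mul_assoc]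
  | add a b ha hb => simp only [map_add, Matrix.add_apply, add_mul, ha, hb]

theorem mapDomainLinearMap_mul_foxMatrix_one_one (b : FreeAlgebra K X)
    (x : MonoidAlgebra K (FreeMonoid X × FreeMonoid X)) :
    mapDomainLinearMap K K (Prod.map id MulOpposite.op) (x * foxMatrix j b 1 1) =
      (rightMul K X b).unop * mapDomainLinearMap K K (Prod.map id MulOpposite.op) x := by
  induction b using FreeAlgebra.induction generalizing x with
  | grade0 r =>
    simpa [Matrix.algebraMap_matrix_apply, ← Prod.one_eq_mk] using
      mapDomainLinearMap_prodMap_op_mul_single 1 r x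
  | grade1 i => simpa [foxMatrix, rightMul] using mapDomainLinearMap_prodMap_op_mul_single _ _ x
  | mul a b ha hb =>
    rw [foxMatrix_mul_one_one, ← mul_assoc, hb, ha, map_mul, MulOpposite.unop_mul, mul_assoc]
  | add a b ha hb =>
    simp only [map_add, Matrix.add_apply, mul_add, ha, hb, MulOpposite.unop_add, add_mul]

theorem foxDeriv_mul (a b : FreeAlgebra K X) :
    foxDeriv j (a * b) = leftMul K X a * foxDeriv j b + (rightMul K X b).unop * foxDeriv j a := by
  simp only [foxDeriv, map_mul, Matrix.mul_apply, Fin.sum_univ_two, map_add,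
    mapDomainLinearMap_foxMatrix_zero_zero_mul, mapDomainLinearMap_mul_foxMatrix_one_one]

theorem foxDeriv_add (a b : FreeAlgebra K X) :
    foxDeriv j (a + b) = foxDeriv j a + foxDeriv j b := by
  simp [foxDeriv]

theorem foxDeriv_algebraMap (r : K) : foxDeriv j (algebraMap K (FreeAlgebra K X) r) = 0 := by
  simp [foxDeriv, Matrix.algebraMap_matrix_apply]

theorem foxDeriv_ι (i : X) : foxDeriv j (ι K i) = if i = j then 1 else 0 := by
  split_ifs <;> simp [foxDeriv, foxMatrix, *, one_def, Prod.map, ← Prod.one_eq_mk]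

theorem twistedAction_leftMul (a y : FreeAlgebra K X) :
    twistedAction j (leftMul K X a) y = a * y := by
  have : (twistedAction j).comp (leftMul K X) = Algebra.lmul K (FreeAlgebra K X) := by
    ext i
    simp [twistedAction, leftMul]
  rw [← AlgHom.comp_apply, this]
  rfl

theorem twistedAction_rightMul (b y : FreeAlgebra K X) :
    twistedAction j (rightMul K X b).unop y = y * killVar j b := by
  induction b using FreeAlgebra.induction generalizing y with
  | grade0 r => simp [twistedAction, Algebra.commutes, Algebra.smul_def]
  | grade1 i => simp [twistedAction, rightMul]
  | mul a b ha hb => simp [Module.End.mul_apply, ha, hb, mul_assoc]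
  | add a b ha hb => simp [ha, hb, mul_add]

theorem twistedAction_foxDeriv (a : FreeAlgebra K X) :
    twistedAction j (foxDeriv j a) (ι K j) = a - killVar j a := by
  induction a using FreeAlgebra.induction with
  | grade0 r => simp [foxDeriv_algebraMap]
  | grade1 i => by_cases h : i = j <;> simp [foxDeriv_ι, killVar, h]
  | mul a b ha hb =>
    rw [foxDeriv_mul, map_add, map_mul, map_mul, LinearMap.add_apply, Module.End.mul_apply,
      Module.End.mul_apply, ha, hb, twistedAction_leftMul, twistedAction_rightMul, map_mul]
    noncomm_ring
  | add a b ha hb =>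
    rw [foxDeriv_add, map_add, LinearMap.add_apply, ha, hb, map_add]
    abel

theorem killVar_mem_adjoin (a : FreeAlgebra K X) :
    killVar j a ∈ Algebra.adjoin K (ι K '' {i | i ≠ j}) := by
  induction a using FreeAlgebra.induction with
  | grade0 r => simp
  | grade1 i =>
    by_cases h : i = j
    · simp [killVar, h]
    · simpa [killVar, h] using Algebra.subset_adjoin (Set.mem_image_of_mem (ι K) h)
  | mul a b ha hb => simpa using Subalgebra.mul_mem _ ha hb
  | add a b ha hb => simpa using Subalgebra.add_mem _ ha hb

theorem foxDeriv_map_mem_span {φ : FreeAlgebra K X →ₐ[K] FreeAlgebra K X}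
    (hfix : ∀ i, i ≠ j → φ (ι K i) = ι K i) (a : FreeAlgebra K X) :
    foxDeriv j (φ a) ∈ Ideal.span {foxDeriv j (φ (ι K j))} := by
  induction a using FreeAlgebra.induction with
  | grade0 r => simp [foxDeriv_algebraMap]
  | grade1 i =>
    by_cases h : i = j
    · exact h ▸ Ideal.subset_span rfl
    · simp [hfix i h, foxDeriv_ι, h]
  | mul a b ha hb =>
    rw [map_mul, foxDeriv_mul]
    exact add_mem (Ideal.mul_mem_left _ _ hb) (Ideal.mul_mem_left _ _ ha)
  | add a b ha hb => rw [map_add, foxDeriv_add]; exact add_mem ha hb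

theorem exists_apply_ι_eq_smul_ι_add [IsDomain K]
    {φ : FreeAlgebra K X →ₐ[K] FreeAlgebra K X}
    (hφ : Function.Surjective φ) (hfix : ∀ i, i ≠ j → φ (ι K i) = ι K i) :
    ∃ (α : K) (f : FreeAlgebra K X), α ≠ 0 ∧ f ∈ Algebra.adjoin K (ι K '' {i | i ≠ j}) ∧
      φ (ι K j) = α • ι K j + f := by
  obtain ⟨a, ha⟩ := hφ (ι K j)
  obtain ⟨E, hE⟩ := Ideal.mem_span_singleton'.mp (foxDeriv_map_mem_span hfix a)
  rw [ha, foxDeriv_ι, if_pos rfl] at hE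
  obtain ⟨p, q, hpq, -, hq⟩ := MonoidAlgebra.exists_eq_single_of_mul_eq_one hE
  have hq1 : q = 1 := Prod.ext (eq_one_of_mul_left' congr(($hpq).1))
    (MulOpposite.unop_injective (eq_one_of_mul_right' congr(($hpq).2.unop)))
  set α := (foxDeriv j (φ (ι K j))).coeff q
  have hα : α ≠ 0 := by
    rintro h0
    rw [hq, h0, single_zero, mul_zero] at hE
    exact zero_ne_one hE
  have hscalar : foxDeriv j (φ (ι K j)) = algebraMap K _ α := hq.trans (by rw [hq1]; rfl)
  have hfox := twistedAction_foxDeriv (j := j) (φ (ι K j))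
  rw [hscalar, AlgHom.commutes, Module.algebraMap_end_apply] at hfox
  exact ⟨α, killVar j (φ (ι K j)), hα, killVar_mem_adjoin _, sub_eq_iff_eq_add.mp hfox.symm⟩

end FreeAlgebra

end

theorem stmt_5 (K : Type*) [Field K] (n : ℕ) (hn : 0 < n)
    (φ : FreeAlgebra K (Fin n) ≃ₐ[K] FreeAlgebra K (Fin n))
    (hfix : ∀ i : Fin n, i ≠ ⟨0, hn⟩ → φ (FreeAlgebra.ι K i) = FreeAlgebra.ι K i) :
    (∃ (α : K) (f : FreeAlgebra K (Fin n)),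
        α ≠ 0 ∧
        f ∈ Algebra.adjoin K (FreeAlgebra.ι K '' {i : Fin n | i ≠ ⟨0, hn⟩}) ∧
        φ (FreeAlgebra.ι K ⟨0, hn⟩) = α • FreeAlgebra.ι K ⟨0, hn⟩ + f) ∧
    φ ∈ Subgroup.closure {ψ | IsElementaryAut K n ψ} := by
  obtain ⟨α, f, hα, hf, hφ⟩ := FreeAlgebra.exists_apply_ι_eq_smul_ι_add (j := ⟨0, hn⟩)
    (φ := φ.toAlgHom) φ.surjective hfix
  exact ⟨⟨α, f, hα, hf, hφ⟩, Subgroup.subset_closure ⟨⟨0, hn⟩, α, f, hα, hf, hφ, hfix⟩⟩
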